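/- For an n×n complex matrix A with A†A ≤ I_n and Ā = √(I_n − A†A), it holds that |det(A)|^{2/n} + |det(Ā)|^{2/n} ≤ 1. -/

import Mathlib

open Matrix ComplexOrder

/-!
Diagonalise `Aᴴ * A` with eigenvalues `λᵢ ∈ [0, 1]`. Then `‖det A‖² = ∏ λᵢ` and
`‖det √(1 - Aᴴ * A)‖² = det (1 - Aᴴ * A) = ∏ (1 - λᵢ)`, so the claim reads
`(∏ λᵢ)^(1/n) + (∏ (1 - λᵢ))^(1/n) ≤ 1`. By AM–GM the two geometric means are bounded by the
arithmetic means of the `λᵢ` and of the `1 - λᵢ`, which add up to `1`.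
-/

namespace Matrix.PosSemidef

/-- The positive semidefinite square root of a positive semidefinite matrix
(the definition removed from Mathlib, restored with its old meaning). -/
noncomputable def sqrt {n : Type*} [Fintype n] [DecidableEq n] {𝕜 : Type*} [RCLike 𝕜]
    {A : Matrix n n 𝕜} (hA : A.PosSemidef) : Matrix n n 𝕜 :=
  (hA.1.eigenvectorUnitary : Matrix n n 𝕜) * diagonal ((↑) ∘ Real.sqrt ∘ hA.1.eigenvalues) *
    (star (hA.1.eigenvectorUnitary : Matrix n n 𝕜))

end Matrix.PosSemidef

namespace Real

theorem prod_rpow_inv_card_le_sum_div_card {ι : Type*} [Fintype ι] [Nonempty ι] {x : ι → ℝ}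
    (hx : ∀ i, 0 ≤ x i) : (∏ i, x i) ^ (Fintype.card ι : ℝ)⁻¹ ≤ (∑ i, x i) / Fintype.card ι := by
  simpa using geom_mean_le_arith_mean Finset.univ 1 x (fun _ _ ↦ zero_le_one)
    (by simp [Fintype.card_pos]) (fun i _ ↦ hx i)

theorem prod_rpow_inv_card_add_prod_one_sub_rpow_inv_card_le_one {ι : Type*} [Fintype ι]
    [Nonempty ι] {x : ι → ℝ} (hx₀ : ∀ i, 0 ≤ x i) (hx₁ : ∀ i, x i ≤ 1) :
    (∏ i, x i) ^ (Fintype.card ι : ℝ)⁻¹ + (∏ i, (1 - x i)) ^ (Fintype.card ι : ℝ)⁻¹ ≤ 1 := by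
  calc _ ≤ (∑ i, x i) / Fintype.card ι + (∑ i, (1 - x i)) / Fintype.card ι :=
        add_le_add (prod_rpow_inv_card_le_sum_div_card hx₀)
          (prod_rpow_inv_card_le_sum_div_card fun i ↦ sub_nonneg.2 (hx₁ i))
    _ = 1 := by
        rw [← add_div, ← Finset.sum_add_distrib]
        simp

end Real

namespace Matrix

variable {n 𝕜 : Type*} [Fintype n] [DecidableEq n] [RCLike 𝕜]

theorem PosSemidef.nonneg_of_mem_spectrum {A : Matrix n n 𝕜} (hA : A.PosSemidef) {x : ℝ}
    (hx : x ∈ spectrum ℝ A) : 0 ≤ x := by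
  rw [hA.1.spectrum_real_eq_range_eigenvalues] at hx
  obtain ⟨i, rfl⟩ := hx
  exact hA.eigenvalues_nonneg i

theorem PosSemidef.sqrt_eq_cfc {A : Matrix n n 𝕜} (hA : A.PosSemidef) :
    hA.sqrt = cfc Real.sqrt A := by
  rw [hA.1.cfc_eq]
  rfl

theorem PosSemidef.sqrt_mul_self {A : Matrix n n 𝕜} (hA : A.PosSemidef) :
    hA.sqrt * hA.sqrt = A := by
  have hA' : IsSelfAdjoint A := hA.1
  rw [hA.sqrt_eq_cfc, ← cfc_mul ..]
  conv_rhs => rw [← cfc_id' ℝ A]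
  exact cfc_congr fun x hx ↦ Real.mul_self_sqrt (hA.nonneg_of_mem_spectrum hx)

theorem PosSemidef.norm_det_sqrt_sq {A : Matrix n n 𝕜} (hA : A.PosSemidef) :
    ‖hA.sqrt.det‖ ^ 2 = ‖A.det‖ := by
  rw [← norm_pow, sq, ← det_mul, hA.sqrt_mul_self]

theorem IsHermitian.det_one_sub {A : Matrix n n 𝕜} (hA : A.IsHermitian) :
    (1 - A).det = ∏ i, (1 - (hA.eigenvalues i : 𝕜)) := by
  simpa [eval_charpoly, Polynomial.eval_prod] using congrArg (Polynomial.eval 1) hA.charpoly_eq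

theorem IsHermitian.norm_det_one_sub {A : Matrix n n 𝕜} (hA : A.IsHermitian)
    (h : ∀ i, hA.eigenvalues i ≤ 1) : ‖(1 - A).det‖ = ∏ i, (1 - hA.eigenvalues i) := by
  rw [hA.det_one_sub, norm_prod]
  refine Finset.prod_congr rfl fun i _ ↦ ?_
  rw [← RCLike.ofReal_one, ← RCLike.ofReal_sub, RCLike.norm_ofReal,
    abs_of_nonneg (sub_nonneg.2 (h i))]

theorem IsHermitian.eigenvalues_le_one {A : Matrix n n 𝕜} (hA : A.IsHermitian)
    (h : (1 - A).PosSemidef) (i : n) : hA.eigenvalues i ≤ 1 := by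
  have hmem : 1 - hA.eigenvalues i ∈ spectrum ℝ (1 - A) := by
    rw [← map_one (algebraMap ℝ (Matrix n n 𝕜)), ← spectrum.singleton_sub_eq]
    exact Set.sub_mem_sub rfl (hA.eigenvalues_mem_spectrum_real i)
  linarith [h.nonneg_of_mem_spectrum hmem]

theorem norm_det_sq_eq_prod_eigenvalues (A : Matrix n n 𝕜) :
    ‖A.det‖ ^ 2 = ∏ i, (isHermitian_conjTranspose_mul_self A).eigenvalues i := by
  have : (Aᴴ * A).det = ((‖A.det‖ ^ 2 : ℝ) : 𝕜) := by
    rw [det_mul, det_conjTranspose, RCLike.star_def, RCLike.conj_mul]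
    push_cast; rfl
  exact_mod_cast this.symm.trans (isHermitian_conjTranspose_mul_self A).det_eq_prod_eigenvalues

end Matrix

/-- for an `n×n` complex matrix `A` with `A†A ≤ I` and
`Ā = √(I − A†A)`, one has `|det A|^(2/n) + |det Ā|^(2/n) ≤ 1`. -/
theorem det_measurement_bound (n : ℕ) (hn : 0 < n) (A : Matrix (Fin n) (Fin n) ℂ)
    (h : (1 - Aᴴ * A).PosSemidef) :
    ‖A.det‖ ^ ((2 : ℝ) / n) + ‖h.sqrt.det‖ ^ ((2 : ℝ) / n) ≤ 1 := by
  have : Nonempty (Fin n) := Fin.pos_iff_nonempty.mp hn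
  set hB := isHermitian_conjTranspose_mul_self A
  have hev₀ : ∀ i, 0 ≤ hB.eigenvalues i := (posSemidef_conjTranspose_mul_self A).eigenvalues_nonneg
  have hev₁ : ∀ i, hB.eigenvalues i ≤ 1 := hB.eigenvalues_le_one h
  have hrpow : ∀ x : ℝ, 0 ≤ x → x ^ ((2 : ℝ) / n) = (x ^ 2) ^ (n : ℝ)⁻¹ := fun x hx ↦ by
    rw [div_eq_mul_inv, Real.rpow_mul hx, Real.rpow_two]
  rw [hrpow _ (norm_nonneg _), hrpow _ (norm_nonneg _), norm_det_sq_eq_prod_eigenvalues,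
    h.norm_det_sqrt_sq, hB.norm_det_one_sub hev₁]
  simpa using Real.prod_rpow_inv_card_add_prod_one_sub_rpow_inv_card_le_one hev₀ hev₁
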